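/- arXiv:2305.04784 — 3 statements merged into one kernel-verified Lean document; each statement's English description precedes it below -/
import Mathlib

section
/- The collection C(W) of minimal nonempty supports of elements of a nonzero finite-dimensional subspace W ⊆ K^E satisfies the circuit elimination axiom for infinite matroids: whenever X ⊆ C ∈ C(W) and {C_x : x ∈ X} ⊆ C(W) is a family with x ∈ C_y iff x = y for all x,y ∈ X, then for every z ∈ C \ (⋃_x C_x) there is C' ∈ C(W) with z ∈ C' ⊆ (C ∪ ⋃_x C_x) \ X. -/
/-- `IsCircuit W C` : C is a minimal nonempty support of an element of W. -/
def IsCircuit {K E : Type*} [Field K] (W : Submodule K (E → K)) (C : Set E) : Prop :=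
  ∃ w ∈ W, w ≠ 0 ∧ Function.support w = C ∧
    ∀ w' ∈ W, w' ≠ 0 → Function.support w' ⊆ C → Function.support w' = C

/-!
Write `C = supp w` and `C_x = supp w_x`. The hypothesis `x ∈ C_y ↔ x = y` makes the `w_x`
linearly independent, so `X` is finite, and `v = w - ∑ₓ (w x / w_x x) • w_x` vanishes on `X`,
is supported in `C ∪ ⋃ₓ C_x`, and agrees with `w` at `z`. It remains to find a circuit through
`z` inside `supp v`: shrinking supports while keeping `z` lowers the dimension of the subspace
of `W` supported there, so the process stops at a circuit.
-/

open Function Module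

def supportedIn (K : Type*) [Semiring K] {E : Type*} (S : Set E) : Submodule K (E → K) where
  carrier := {u | support u ⊆ S}
  add_mem' hu hv := (support_add _ _).trans (Set.union_subset hu hv)
  zero_mem' := by simp
  smul_mem' c _ hu := (support_const_smul_subset c _).trans hu

theorem supportedIn_mono {K E : Type*} [Semiring K] {S T : Set E} (h : S ⊆ T) :
    supportedIn K S ≤ supportedIn K T :=
  fun _ hu => (show _ ⊆ S from hu).trans h

section Circuits

variable {K E : Type*} [Field K] {W : Submodule K (E → K)}

theorem finrank_inf_supportedIn_lt [FiniteDimensional K W] {u v : E → K} (hv : v ∈ W)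
    (huv : support u ⊂ support v) :
    finrank K (W ⊓ supportedIn K (support u) : Submodule K (E → K)) <
      finrank K (W ⊓ supportedIn K (support v) : Submodule K (E → K)) := by
  have : FiniteDimensional K (W ⊓ supportedIn K (support v) : Submodule K (E → K)) :=
    Submodule.finiteDimensional_of_le inf_le_left
  refine Submodule.finrank_lt_finrank_of_lt
    (lt_of_le_of_ne (inf_le_inf_left _ (supportedIn_mono huv.subset)) fun heq => ?_)
  have hv' : v ∈ W ⊓ supportedIn K (support u) :=
    heq ▸ ⟨hv, show support v ⊆ support v from subset_rfl⟩
  exact huv.not_subset hv'.2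

theorem exists_support_ssubset_of_not_isCircuit {v : E → K} (hv : v ∈ W) {z : E}
    (hz : v z ≠ 0) (hnot : ¬IsCircuit W (support v)) :
    ∃ u ∈ W, u z ≠ 0 ∧ support u ⊂ support v := by
  have hv0 : v ≠ 0 := fun h => hz (by simp [h])
  obtain ⟨w, hw, hw0, hwv, hne⟩ :
      ∃ w ∈ W, w ≠ 0 ∧ support w ⊆ support v ∧ support w ≠ support v := by
    by_contra! h
    exact hnot ⟨v, hv, hv0, rfl, h⟩
  by_cases hwz : w z = 0
  · obtain ⟨e, he⟩ := ne_iff.mp hw0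
    -- subtract the multiple of `w` that kills `v` at `e`; `z` survives since `w z = 0`
    refine ⟨v - (v e / w e) • w, W.sub_mem hv (W.smul_mem _ hw), by simpa [hwz] using hz, ?_⟩
    have hsub : support (v - (v e / w e) • w) ⊆ support v :=
      (support_sub v _).trans (Set.union_subset subset_rfl
        ((support_const_smul_subset _ w).trans hwv))
    refine (Set.ssubset_iff_of_subset hsub).2 ⟨e, hwv he, ?_⟩
    simp [div_mul_cancel₀ _ he]
  · exact ⟨w, hw, hwz, hwv.ssubset_of_ne hne⟩

theorem exists_isCircuit_mem_subset_support [FiniteDimensional K W] {v : E → K} (hv : v ∈ W)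
    {z : E} (hz : v z ≠ 0) : ∃ C, IsCircuit W C ∧ z ∈ C ∧ C ⊆ support v := by
  induction h : finrank K (W ⊓ supportedIn K (support v) : Submodule K (E → K))
    using Nat.strong_induction_on generalizing v with
  | _ n ih =>
    by_cases hC : IsCircuit W (support v)
    · exact ⟨_, hC, hz, subset_rfl⟩
    obtain ⟨u, hu, huz, huv⟩ := exists_support_ssubset_of_not_isCircuit hv hz hC
    obtain ⟨C, hC, hzC, hCu⟩ := ih _ (h ▸ finrank_inf_supportedIn_lt hv huv) hu huz rfl
    exact ⟨C, hC, hzC, hCu.trans huv.subset⟩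

end Circuits

section Triangular

variable {ι K E : Type*} {f : ι → E → K} {g : ι → E}

theorem sum_smul_apply_of_apply_eq_zero [Semiring K] (hoff : ∀ i j, i ≠ j → f j (g i) = 0)
    {s : Finset ι} (c : ι → K) {i : ι} (hi : i ∈ s) :
    (∑ j ∈ s, c j • f j) (g i) = c i * f i (g i) := by
  rw [Finset.sum_apply, Finset.sum_eq_single_of_mem i hi fun j _ hji => ?_]
  · rfl
  · simp [hoff i j hji.symm]

theorem linearIndependent_of_apply_ne_zero_of_apply_eq_zero [Ring K] [NoZeroDivisors K]
    (hdiag : ∀ i, f i (g i) ≠ 0) (hoff : ∀ i j, i ≠ j → f j (g i) = 0) :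
    LinearIndependent K f := by
  refine linearIndependent_iff'.2 fun s c hsum i hi => ?_
  have := congrFun hsum (g i)
  rw [sum_smul_apply_of_apply_eq_zero hoff c hi] at this
  exact (mul_eq_zero.1 this).resolve_right (hdiag i)

end Triangular

theorem sub_sum_smul_apply_of_forall_apply_eq_zero {ι K E : Type*} [Ring K] [Fintype ι]
    (w : E → K) (f : ι → E → K) (c : ι → K) {e : E} (he : ∀ i, f i e = 0) :
    (w - ∑ i, c i • f i) e = w e := by
  simp [Finset.sum_apply, he]

theorem stmt6_general {K E : Type*} [Field K] (W : Submodule K (E → K))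
    (hfin : FiniteDimensional K W)
    (C : Set E) (hC : IsCircuit W C) (X : Set E)
    (Cf : X → Set E) (hCf : ∀ x : X, IsCircuit W (Cf x))
    (hmem : ∀ x y : X, (x : E) ∈ Cf y ↔ x = y)
    (z : E) (hz : z ∈ C \ ⋃ x : X, Cf x) :
    ∃ C', IsCircuit W C' ∧ z ∈ C' ∧ C' ⊆ (C ∪ ⋃ x : X, Cf x) \ X := by
  obtain ⟨w, hw, -, rfl, -⟩ := hC
  choose f hf _ hfC _ using hCf
  simp only [← hfC] at hmem hz ⊢
  have hdiag : ∀ x : X, f x x ≠ 0 := fun x => (hmem x x).2 rfl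
  have hoff : ∀ x y : X, x ≠ y → f y x = 0 :=
    fun x y hxy => notMem_support.1 (hxy ∘ (hmem x y).1)
  have hli : LinearIndependent K f :=
    linearIndependent_of_apply_ne_zero_of_apply_eq_zero (g := Subtype.val) hdiag hoff
  have : Finite X :=
    (LinearIndependent.of_comp W.subtype (v := fun x => (⟨f x, hf x⟩ : W)) hli).finite
  have := Fintype.ofFinite X
  set v := w - ∑ x : X, (w x / f x x) • f x
  have hvX (x : X) : v x = 0 := by
    simp [v, sum_smul_apply_of_apply_eq_zero hoff _ (Finset.mem_univ x), hdiag]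
  have hvw {e : E} (he : e ∉ ⋃ x : X, support (f x)) : v e = w e :=
    sub_sum_smul_apply_of_forall_apply_eq_zero w f _ fun x => notMem_support.1 fun h =>
      he (Set.mem_iUnion_of_mem x h)
  have hv : support v ⊆ (support w ∪ ⋃ x : X, support (f x)) \ X := by
    refine fun e he => ⟨by_contra fun h => he ?_, fun heX => he (hvX ⟨e, heX⟩)⟩
    rw [Set.mem_union, not_or] at h
    rw [hvw h.2, notMem_support.1 h.1]
  have hvW : v ∈ W := W.sub_mem hw (W.sum_mem fun x _ => W.smul_mem _ (hf x))
  obtain ⟨C', hC', hzC', hC'v⟩ :=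
    exists_isCircuit_mem_subset_support hvW ((hvw hz.2).trans_ne hz.1)
  exact ⟨C', hC', hzC', hC'v.trans hv⟩

/-- circuit elimination axiom (for infinite matroids) for the
collection C(W) of minimal nonempty supports of a nonzero finite-dimensional
subspace W ⊆ K^E. -/
theorem stmt6 {K E : Type*} [Field K] (W : Submodule K (E → K))
    (hW : W ≠ ⊥) (hfin : FiniteDimensional K W)
    (C : Set E) (hC : IsCircuit W C) (X : Set E) (hX : X ⊆ C)
    (Cf : X → Set E) (hCf : ∀ x : X, IsCircuit W (Cf x))
    (hmem : ∀ x y : X, (x : E) ∈ Cf y ↔ x = y)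
    (z : E) (hz : z ∈ C \ ⋃ x : X, Cf x) :
    ∃ C', IsCircuit W C' ∧ z ∈ C' ∧ C' ⊆ (C ∪ ⋃ x : X, Cf x) \ X :=
  stmt6_general W hfin C hC X Cf hCf hmem z hz
end

section
/- Every nonempty support of an element of a nonzero finite-dimensional subspace W ⊆ K^E is a union of minimal supports (circuits) of W. -/
/-- Functions with support contained in `S` form a submodule. -/
def supLe {K E : Type*} [Field K] (S : Set E) : Submodule K (E → K) where
  carrier := {x | Function.support x ⊆ S}
  add_mem' hx hy := (Function.support_add _ _).trans (Set.union_subset hx hy)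
  zero_mem' := by simp
  smul_mem' c x hx := (Function.support_const_smul_subset c x).trans hx

lemma mem_supLe {K E : Type*} [Field K] {S : Set E} {x : E → K} :
    x ∈ (supLe S : Submodule K (E → K)) ↔ Function.support x ⊆ S := Iff.rfl

lemma exists_circuit {K E : Type*} [Field K] (W : Submodule K (E → K))
    [FiniteDimensional K W] :
    ∀ n : ℕ, ∀ w ∈ W, ∀ e : E, w e ≠ 0 →
      Module.finrank K (W ⊓ supLe (Function.support w) : Submodule K (E → K)) = n →
      ∃ C, IsCircuit W C ∧ C ⊆ Function.support w ∧ e ∈ C := by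
  intro n
  induction n using Nat.strong_induction_on with
  | _ n IH =>
    intro w hw e he hrank
    by_cases hmin : ∀ w' ∈ W, w' ≠ 0 → Function.support w' ⊆ Function.support w →
        Function.support w' = Function.support w
    · refine ⟨Function.support w, ⟨w, hw, ?_, rfl, hmin⟩, subset_rfl, he⟩
      intro h0; simp [h0] at he
    · push_neg at hmin
      obtain ⟨u, hu, hu0, husub, hune⟩ := hmin
      -- Construct v ∈ W with v e ≠ 0 and support strictly inside support w.
      have hwe : e ∈ Function.support w := he
      obtain ⟨v, hv, hve, hvsub, f, hfw, hfv⟩ :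
          ∃ v ∈ W, v e ≠ 0 ∧ Function.support v ⊆ Function.support w ∧
            ∃ f, f ∈ Function.support w ∧ f ∉ Function.support v := by
        by_cases hue : u e = 0
        · obtain ⟨f, hf⟩ := Function.ne_iff.mp hu0
          have hfu : f ∈ Function.support u := hf
          refine ⟨u f • w - w f • u, ?_, ?_, ?_, f, husub hfu, ?_⟩
          · exact W.sub_mem (W.smul_mem _ hw) (W.smul_mem _ hu)
          · simp only [Pi.sub_apply, Pi.smul_apply, smul_eq_mul, hue, mul_zero, sub_zero]
            exact mul_ne_zero hf he
          · refine (Function.support_sub _ _).trans (Set.union_subset ?_ ?_)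
            · exact Function.support_const_smul_subset _ _
            · exact (Function.support_const_smul_subset _ _).trans husub
          · simp [mul_comm]
        · obtain ⟨f, hfw, hfu⟩ := Set.exists_of_ssubset (husub.ssubset_of_ne hune)
          exact ⟨u, hu, hue, husub, f, hfw, hfu⟩
      have hv0 : v ≠ 0 := fun h => hve (by simp [h])
      have hlt : (W ⊓ supLe (Function.support v) : Submodule K (E → K)) <
          (W ⊓ supLe (Function.support w) : Submodule K (E → K)) := by
        refine lt_of_le_of_ne (inf_le_inf_left _ ?_) ?_
        · exact fun x hx => (mem_supLe.mp hx).trans hvsub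
        · intro hEq
          have : w ∈ (W ⊓ supLe (Function.support v) : Submodule K (E → K)) := by
            rw [hEq]; exact ⟨hw, mem_supLe.mpr subset_rfl⟩
          exact hfv (mem_supLe.mp this.2 hfw)
      have : FiniteDimensional K (W ⊓ supLe (Function.support w) : Submodule K (E → K)) :=
        Submodule.finiteDimensional_of_le inf_le_left
      have hr := Submodule.finrank_lt_finrank_of_lt hlt
      rw [hrank] at hr
      obtain ⟨C, hC, hCsub, heC⟩ := IH _ hr v hv e hve rfl
      exact ⟨C, hC, hCsub.trans hvsub, heC⟩

/-- every nonempty support of an element of a nonzero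
finite-dimensional subspace W ⊆ K^E is a union of circuits (minimal supports)
of W. -/
theorem stmt8 {K E : Type*} [Field K] (W : Submodule K (E → K))
    (hW : W ≠ ⊥) (hfin : FiniteDimensional K W)
    (w : E → K) (hw : w ∈ W) (hw0 : w ≠ 0) :
    Function.support w = ⋃₀ {C | IsCircuit W C ∧ C ⊆ Function.support w} := by
  apply Set.Subset.antisymm
  · intro e he
    obtain ⟨C, hC, hCsub, heC⟩ := exists_circuit W _ w hw e he rfl
    exact ⟨C, ⟨hC, hCsub⟩, heC⟩
  · rintro e ⟨C, ⟨hC, hCsub⟩, heC⟩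
    exact hCsub heC
end

section
/- The set T(W) of supports of elements of a finite-dimensional subspace W ⊆ K^E is closed under union if and only if the map Ψ_W : Lin(W) → 2^E, L ↦ {i : u^{(i)} ∉ L}, is a bijection onto T(W). -/
/-!
Write `V = K^s` and view `W` as the space of functions `j ↦ f (u j)` for linear functionals `f`
on `V`; the support of such a function is `Ψ (ker f)`. Every subspace `L` has the same `Ψ`-value
as the flat spanned by the `u j` lying in `L`, so `Ψ` is injective on flats, hits every support,
and its image is closed under union since `Ψ (L ⊓ M) = Ψ L ∪ Ψ M`. Conversely, if supports are
closed under union and `L` is a proper flat, take `M ⊇ L` minimal with `Ψ M` a support (subspaces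
of `V` satisfy the descending chain condition). For `j ∈ Ψ L` a functional vanishing on `L` but
not at `u j` gives a support through `j` inside `Ψ L`; its union with `Ψ M` is `Ψ (M ⊓ ker f)`,
so minimality forces `j ∈ Ψ M`, whence `Ψ L = Ψ M` is a support.
-/

open Submodule Set

namespace VectorConfig

variable {K V E : Type*} [Field K] [AddCommGroup V] [Module K V]

/-- The map `Ψ` of the paper. -/
def outside (u : E → V) (L : Submodule K V) : Set E := {j | u j ∉ L}

variable (K) in
/-- `Lin(W)`. -/
def flats (u : E → V) : Set (Submodule K V) := {L | L ≠ ⊤ ∧ ∃ X : Set E, L = span K (u '' X)}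

variable (K) in
/-- `T(W)`: the supports of the nonzero functions `j ↦ f (u j)`. -/
def supports (u : E → V) : Set (Set E) :=
  {S | S.Nonempty ∧ ∃ f : Module.Dual K V, outside u (LinearMap.ker f) = S}

def flatClosure (u : E → V) (L : Submodule K V) : Submodule K V := span K (u '' (outside u L)ᶜ)

variable {u : E → V}

lemma outside_anti {L M : Submodule K V} (h : L ≤ M) : outside u M ⊆ outside u L :=
  fun _ hj hL => hj (h hL)

lemma outside_inf (L M : Submodule K V) : outside u (L ⊓ M) = outside u L ∪ outside u M := by
  ext j
  simp only [outside, mem_inf, mem_ofPred_eq, mem_union, not_and_or]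

lemma ne_top_of_outside_nonempty {L : Submodule K V} (h : (outside u L).Nonempty) : L ≠ ⊤ := by
  rintro rfl
  obtain ⟨j, hj⟩ := h
  exact hj mem_top

lemma outside_nonempty (hu : span K (range u) = ⊤) {L : Submodule K V} (hL : L ≠ ⊤) :
    (outside u L).Nonempty := by
  by_contra h
  refine hL (eq_top_iff.2 (hu ▸ span_le.2 ?_))
  rintro _ ⟨j, rfl⟩
  by_contra hj
  exact h ⟨j, hj⟩

lemma flatClosure_le (L : Submodule K V) : flatClosure u L ≤ L := by
  refine span_le.2 ?_
  rintro _ ⟨j, hj, rfl⟩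
  exact not_not.1 hj

lemma outside_flatClosure (L : Submodule K V) : outside u (flatClosure u L) = outside u L :=
  (outside_anti (flatClosure_le L)).antisymm' fun j hj hL =>
    hj (subset_span ⟨j, not_not.2 hL, rfl⟩)

lemma flatClosure_eq_self {L : Submodule K V} (hL : L ∈ flats K u) : flatClosure u L = L := by
  obtain ⟨-, X, rfl⟩ := hL
  refine le_antisymm (flatClosure_le _) (span_mono (image_mono fun j hj => ?_))
  exact not_not.2 (subset_span ⟨j, hj, rfl⟩)

lemma flatClosure_mem_flats {L : Submodule K V} (hL : L ≠ ⊤) : flatClosure u L ∈ flats K u :=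
  ⟨ne_top_of_le_ne_top hL (flatClosure_le L), _, rfl⟩

lemma injOn_outside : InjOn (outside u) (flats K u) := by
  intro L hL M hM h
  rw [← flatClosure_eq_self hL, ← flatClosure_eq_self hM, flatClosure, flatClosure, h]

lemma surjOn_outside : SurjOn (outside u) (flats K u) (supports K u) := by
  rintro _ ⟨hS, f, rfl⟩
  exact ⟨_, flatClosure_mem_flats (ne_top_of_outside_nonempty hS), outside_flatClosure _⟩

lemma union_mem_image_outside {L M : Submodule K V} (hL : L ∈ flats K u) :
    outside u L ∪ outside u M ∈ outside u '' flats K u :=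
  ⟨flatClosure u (L ⊓ M), flatClosure_mem_flats (ne_top_of_le_ne_top hL.1 inf_le_left),
    by rw [outside_flatClosure, outside_inf]⟩

lemma outside_ker_mem_supports {f : Module.Dual K V} {j : E}
    (hj : j ∈ outside u (LinearMap.ker f)) : outside u (LinearMap.ker f) ∈ supports K u :=
  ⟨⟨j, hj⟩, f, rfl⟩

lemma exists_dual_of_mem_outside {L : Submodule K V} {j : E} (hj : j ∈ outside u L) :
    ∃ f : Module.Dual K V, L ≤ LinearMap.ker f ∧ j ∈ outside u (LinearMap.ker f) := by
  obtain ⟨f, hfj, hfL⟩ := exists_dual_map_eq_bot_of_notMem hj inferInstance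
  exact ⟨f, LinearMap.le_ker_iff_map.2 hfL, hfj⟩

theorem outside_mem_supports [FiniteDimensional K V] (hu : span K (range u) = ⊤)
    (hT : ∀ S₁ ∈ supports K u, ∀ S₂ ∈ supports K u, S₁ ∪ S₂ ∈ supports K u)
    {L : Submodule K V} (hL : L ≠ ⊤) : outside u L ∈ supports K u := by
  obtain ⟨j₀, hj₀⟩ := outside_nonempty hu hL
  obtain ⟨f₀, hLf₀, hf₀⟩ := exists_dual_of_mem_outside hj₀
  obtain ⟨M, hmin⟩ := exists_minimal_of_wellFoundedLT
    (fun M => L ≤ M ∧ outside u M ∈ supports K u) ⟨_, hLf₀, outside_ker_mem_supports hf₀⟩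
  obtain ⟨hLM, hM⟩ := hmin.prop
  suffices outside u L ⊆ outside u M from (outside_anti hLM).antisymm this ▸ hM
  intro j hj
  obtain ⟨f, hLf, hf⟩ := exists_dual_of_mem_outside hj
  have hMf : outside u (M ⊓ LinearMap.ker f) ∈ supports K u :=
    outside_inf M _ ▸ hT _ hM _ (outside_ker_mem_supports hf)
  have hM_le : M ≤ LinearMap.ker f :=
    (hmin.le_of_le ⟨le_inf hLM hLf, hMf⟩ inf_le_left).trans inf_le_right
  exact outside_anti hM_le hf

theorem unionClosed_supports_iff_bijOn [FiniteDimensional K V] (hu : span K (range u) = ⊤) :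
    (∀ S₁ ∈ supports K u, ∀ S₂ ∈ supports K u, S₁ ∪ S₂ ∈ supports K u) ↔
      BijOn (outside u) (flats K u) (supports K u) := by
  refine ⟨fun hT => ⟨fun L hL => outside_mem_supports hu hT hL.1, injOn_outside, surjOn_outside⟩,
    fun h => ?_⟩
  rw [← h.image_eq]
  rintro _ ⟨L, hL, rfl⟩ _ ⟨M, -, rfl⟩
  exact union_mem_image_outside hL

end VectorConfig

section Coordinates

variable {K E : Type*} [Field K] {s : ℕ} {φ : Fin s → E → K} {u : E → Fin s → K}

lemma dotProduct_eq_sum_smul_apply (hu : ∀ j i, u j i = φ i j) (c : Fin s → K) (j : E) :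
    c ⬝ᵥ u j = (∑ i, c i • φ i) j := by
  simp [dotProduct, Finset.sum_apply, hu]

lemma mem_span_range_iff_exists_dual (hu : ∀ j i, u j i = φ i j) (w : E → K) :
    w ∈ span K (range φ) ↔ ∃ f : Module.Dual K (Fin s → K), w = fun j => f (u j) := by
  rw [mem_span_range_iff_exists_fun, (dotProductEquiv K (Fin s)).surjective.exists]
  simp only [dotProductEquiv_apply_apply, dotProduct_eq_sum_smul_apply hu, eq_comm (a := w)]

lemma span_range_eq_top_of_linearIndependent (hu : ∀ j i, u j i = φ i j)
    (hφ : LinearIndependent K φ) :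
    span K (range u) = ⊤ := by
  by_contra h
  obtain ⟨f, hf0, hf⟩ := exists_dual_map_eq_bot_of_lt_top (lt_top_iff_ne_top.2 h) inferInstance
  obtain ⟨c, rfl⟩ := (dotProductEquiv K (Fin s)).surjective f
  have hc : ∑ i, c i • φ i = 0 := funext fun j => by
    rw [← dotProduct_eq_sum_smul_apply hu, ← dotProductEquiv_apply_apply]
    exact LinearMap.le_ker_iff_map.2 hf (subset_span ⟨j, rfl⟩)
  exact hf0 (by rw [show c = 0 from funext (Fintype.linearIndependent_iff.1 hφ c hc), map_zero])

lemma setOf_support_eq_supports (hu : ∀ j i, u j i = φ i j) :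
    {S | ∃ w ∈ span K (range φ), w ≠ 0 ∧ Function.support w = S} =
      VectorConfig.supports K u := by
  ext S
  constructor
  · rintro ⟨w, hw, hw0, rfl⟩
    obtain ⟨f, rfl⟩ := (mem_span_range_iff_exists_dual hu w).1 hw
    exact ⟨Function.support_nonempty_iff.2 hw0, f, rfl⟩
  · rintro ⟨hS, f, rfl⟩
    exact ⟨_, (mem_span_range_iff_exists_dual hu _).2 ⟨f, rfl⟩,
      Function.support_nonempty_iff.1 hS, rfl⟩

end Coordinates

theorem stmt13_general {K E : Type*} [Field K] {s : ℕ}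
    (φ : Fin s → (E → K)) (hφ : LinearIndependent K φ)
    (u : E → (Fin s → K)) (hu : ∀ j i, u j i = φ i j) :
    (∀ S₁ ∈ {S | ∃ w ∈ Submodule.span K (Set.range φ), w ≠ 0 ∧ Function.support w = S},
      ∀ S₂ ∈ {S | ∃ w ∈ Submodule.span K (Set.range φ), w ≠ 0 ∧ Function.support w = S},
        S₁ ∪ S₂ ∈ {S | ∃ w ∈ Submodule.span K (Set.range φ), w ≠ 0 ∧ Function.support w = S}) ↔
    Set.BijOn (fun L : Submodule K (Fin s → K) => {i : E | u i ∉ L})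
      {L | L ≠ ⊤ ∧ ∃ X : Set E, L = Submodule.span K (u '' X)}
      {S | ∃ w ∈ Submodule.span K (Set.range φ), w ≠ 0 ∧ Function.support w = S} := by
  rw [setOf_support_eq_supports hu]
  exact VectorConfig.unionClosed_supports_iff_bijOn (span_range_eq_top_of_linearIndependent hu hφ)

/-- the set T(W) of supports of (nonzero) elements of
W = span{φ_1,…,φ_s} is closed under union iff the map
Ψ_W : Lin(W) → 2^E, L ↦ {i : u^{(i)} ∉ L}, is a bijection onto T(W). -/
theorem stmt13 {K E : Type*} [Field K] {s : ℕ} (hs : 0 < s)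
    (φ : Fin s → (E → K)) (hφ : LinearIndependent K φ)
    (u : E → (Fin s → K)) (hu : ∀ j i, u j i = φ i j) :
    (∀ S₁ ∈ {S | ∃ w ∈ Submodule.span K (Set.range φ), w ≠ 0 ∧ Function.support w = S},
      ∀ S₂ ∈ {S | ∃ w ∈ Submodule.span K (Set.range φ), w ≠ 0 ∧ Function.support w = S},
        S₁ ∪ S₂ ∈ {S | ∃ w ∈ Submodule.span K (Set.range φ), w ≠ 0 ∧ Function.support w = S}) ↔
    Set.BijOn (fun L : Submodule K (Fin s → K) => {i : E | u i ∉ L})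
      {L | L ≠ ⊤ ∧ ∃ X : Set E, L = Submodule.span K (u '' X)}
      {S | ∃ w ∈ Submodule.span K (Set.range φ), w ≠ 0 ∧ Function.support w = S} :=
  stmt13_general φ hφ u hu
end
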